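/- Let m ≥ 1, let L be a binary code of length m, let Dens = ahw(L)/m be the label density, and let c > 0 be a real constant (the matching probability factor r₀^{d·τ#}). Then the expected Hamming-loss fitness F̄ = c·(1 − ahd(L)/m) satisfies the lower bound c·(2·Dens² − 2·Dens + 1) ≤ F̄. Moreover, the quadratic lower bound 2·Dens² − 2·Dens + 1 attains its minimum value 1/2 at Dens = 1/2. -/

import Mathlib

/-- The average Hamming distance of a binary code `L` of length `m`,
`ahd(L) = (1/|L|²) · Σ_{x∈L} Σ_{y∈L} hd(x,y)` (over all ordered pairs). -/
noncomputable def ahd {m : ℕ} (L : Finset (Fin m → Bool)) : ℝ :=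
  (1 / (L.card : ℝ) ^ 2) * ∑ x ∈ L, ∑ y ∈ L, (hammingDist x y : ℝ)

/-- The Hamming weight of a binary vector: the number of nonzero coordinates. -/
def hw {m : ℕ} (x : Fin m → Bool) : ℕ :=
  (Finset.univ.filter fun i => x i = true).card

/-- The average Hamming weight of a binary code `L`,
`ahw(L) = (1/|L|) · Σ_{x∈L} hw(x)`. -/
noncomputable def ahw {m : ℕ} (L : Finset (Fin m → Bool)) : ℝ :=
  (1 / (L.card : ℝ)) * ∑ x ∈ L, (hw x : ℝ)

/-!
Splitting the Hamming distance coordinatewise, `∑_{x,y ∈ L} hd(x,y) = ∑ᵢ 2 kᵢ (|L| - kᵢ)`, where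
`kᵢ` is the number of labelsets containing class `i`. With the class frequencies `pᵢ = kᵢ / |L|`
this reads `ahd L = 2 ∑ᵢ pᵢ (1 - pᵢ)`, while `Dens` is the mean of the `pᵢ`. Hence
`1 - ahd L / m - (2 Dens² - 2 Dens + 1) = 2 (mean of pᵢ² - (mean of pᵢ)²) ≥ 0`.
-/

open Finset

noncomputable def classFrequency {m : ℕ} (L : Finset (Fin m → Bool)) (i : Fin m) : ℝ :=
  (#{x ∈ L | x i} : ℝ) / #L

lemma sum_sum_ite_ne_eq_two_mul_card_mul_card {α : Type*} (s : Finset α) (f : α → Bool) :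
    ∑ x ∈ s, ∑ y ∈ s, (if f x ≠ f y then 1 else 0 : ℕ)
      = 2 * #{x ∈ s | f x} * #{x ∈ s | f x = false} := by
  have inner (x : α) : ∑ y ∈ s, (if f x ≠ f y then 1 else 0 : ℕ)
      = if f x then #{y ∈ s | f y = false} else #{y ∈ s | f y} := by
    rw [← card_filter]
    cases f x <;> simp [eq_comm (b := f _)]
  simp only [inner, sum_ite, sum_const, smul_eq_mul, Bool.not_eq_true]
  ring

lemma sum_sum_hammingDist_eq {ι : Type*} [Fintype ι] (L : Finset (ι → Bool)) :
    ∑ x ∈ L, ∑ y ∈ L, hammingDist x y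
      = ∑ i, 2 * #{x ∈ L | x i} * #{x ∈ L | x i = false} := by
  conv_lhs => enter [2, x]; simp only [hammingDist, card_filter]; rw [sum_comm]
  rw [sum_comm]
  exact sum_congr rfl fun i _ => sum_sum_ite_ne_eq_two_mul_card_mul_card L (· i)

lemma card_filter_eq_false_add_card_filter {α : Type*} (s : Finset α) (f : α → Bool) :
    #{x ∈ s | f x = false} + #{x ∈ s | f x} = #s := by
  simpa [add_comm] using card_filter_add_card_filter_not (s := s) (fun x => f x = true)

lemma ahw_eq_sum_classFrequency {m : ℕ} (L : Finset (Fin m → Bool)) :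
    ahw L = ∑ i, classFrequency L i := by
  have hcount : ∑ x ∈ L, hw x = ∑ i, #{x ∈ L | x i} := by
    simp only [hw, card_filter]
    exact sum_comm
  simp only [ahw, classFrequency, ← sum_div, ← Nat.cast_sum, ← hcount, one_div_mul_eq_div]

lemma ahd_eq_two_mul_sum {m : ℕ} (L : Finset (Fin m → Bool)) :
    ahd L = 2 * ∑ i, classFrequency L i * (1 - classFrequency L i) := by
  rcases L.eq_empty_or_nonempty with rfl | hL
  · simp [ahd, classFrequency]
  have hn : (#L : ℝ) ≠ 0 := by positivity
  have hfalse (i : Fin m) : (#{x ∈ L | x i = false} : ℝ) = #L - #{x ∈ L | x i} := by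
    rw [eq_sub_iff_add_eq, ← Nat.cast_add, card_filter_eq_false_add_card_filter L (· i)]
  have hsum : ∑ x ∈ L, ∑ y ∈ L, (hammingDist x y : ℝ)
      = ∑ i, 2 * (#{x ∈ L | x i} : ℝ) * (#L - #{x ∈ L | x i}) := by
    simp_rw [← hfalse]
    exact_mod_cast sum_sum_hammingDist_eq L
  rw [ahd, hsum, mul_sum, mul_sum]
  refine sum_congr rfl fun i _ => ?_
  rw [classFrequency]
  field_simp

theorem expected_fitness_lower_bound_general (m : ℕ)
    (L : Finset (Fin m → Bool)) (c : ℝ) (hc : 0 < c)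
    (Dens : ℝ) (hDens : Dens = ahw L / (m : ℝ)) :
    c * (2 * Dens ^ 2 - 2 * Dens + 1) ≤ c * (1 - ahd L / (m : ℝ)) ∧
    (∀ x : ℝ, (1 : ℝ) / 2 ≤ 2 * x ^ 2 - 2 * x + 1) ∧
    2 * ((1 : ℝ) / 2) ^ 2 - 2 * ((1 : ℝ) / 2) + 1 = 1 / 2 := by
  refine ⟨mul_le_mul_of_nonneg_left ?_ hc.le, fun x => by nlinarith [sq_nonneg (x - 1 / 2)],
    by norm_num⟩
  rw [hDens, ahw_eq_sum_classFrequency, ahd_eq_two_mul_sum]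
  set p := classFrequency L
  have jensen : ((∑ i, p i) / m) ^ 2 ≤ (∑ i, p i ^ 2) / m := by
    simpa using sum_div_card_sq_le_sum_sq_div_card (s := univ) (f := p)
  have hvar : (2 * ∑ i, p i * (1 - p i)) / m
      = 2 * ((∑ i, p i) / m) - 2 * ((∑ i, p i ^ 2) / m) := by
    simp only [mul_sub, mul_one, sum_sub_distrib, sq]
    ring
  linarith

/-- For a binary code `L` of length `m ≥ 1`, label density `Dens = ahw(L)/m`, and a
matching-probability constant `c > 0`, the expected Hamming-loss fitness
`F̄ = c·(1 − ahd(L)/m)` satisfies `c·(2·Dens² − 2·Dens + 1) ≤ F̄`; moreover, the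
quadratic lower bound `2·x² − 2·x + 1` attains its minimum value `1/2` at `x = 1/2`. -/
theorem expected_fitness_lower_bound (m : ℕ) (hm : 1 ≤ m)
    (L : Finset (Fin m → Bool)) (hL : L.Nonempty) (c : ℝ) (hc : 0 < c)
    (Dens : ℝ) (hDens : Dens = ahw L / (m : ℝ)) :
    c * (2 * Dens ^ 2 - 2 * Dens + 1) ≤ c * (1 - ahd L / (m : ℝ)) ∧
    (∀ x : ℝ, (1 : ℝ) / 2 ≤ 2 * x ^ 2 - 2 * x + 1) ∧
    2 * ((1 : ℝ) / 2) ^ 2 - 2 * ((1 : ℝ) / 2) + 1 = 1 / 2 :=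
  expected_fitness_lower_bound_general m L c hc Dens hDens
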